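/- arXiv:1509.07817 — 2 statements merged into one kernel-verified Lean document; each statement's English description precedes it below -/
import Mathlib

section
/- Let M be a torsion abelian group of cofinite type such that for all n ≥ 1 the cardinality |{x ∈ M : n•x=0}| equals n^m for a fixed natural number m. Then M ≅ (ℚ/ℤ)^m. -/
/-- The `n`-torsion subgroup of an abelian group. -/
def nTorsion (n : ℕ) (A : Type*) [AddCommGroup A] : AddSubgroup A where
  carrier := {x | n • x = 0}
  zero_mem' := by simp
  add_mem' := by
    intro a b ha hb
    simp only [Set.mem_setOf_eq] at *
    rw [smul_add, ha, hb, add_zero]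
  neg_mem' := by
    intro a ha
    simp only [Set.mem_setOf_eq] at *
    rw [smul_neg, ha, neg_zero]

/-- The subgroup `n•A` of an abelian group `A`. -/
def smulTop (n : ℕ) (A : Type*) [AddCommGroup A] : AddSubgroup A where
  carrier := Set.range fun y : A => n • y
  zero_mem' := ⟨0, smul_zero n⟩
  add_mem' := by
    rintro _ _ ⟨a, rfl⟩ ⟨b, rfl⟩
    exact ⟨a + b, smul_add n a b⟩
  neg_mem' := by
    rintro _ ⟨a, rfl⟩
    exact ⟨-a, smul_neg n a⟩

/-- The `ℓ`-primary component of an abelian group: elements of `ℓ`-power order. -/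
def primaryPart (ℓ : ℕ) (A : Type*) [AddCommGroup A] : AddSubgroup A where
  carrier := {x | ∃ k : ℕ, ℓ ^ k • x = 0}
  zero_mem' := ⟨0, smul_zero _⟩
  add_mem' := by
    rintro a b ⟨j, hj⟩ ⟨k, hk⟩
    refine ⟨j + k, ?_⟩
    have ha : ℓ ^ (j + k) • a = 0 := by rw [add_comm, pow_add, mul_smul, hj, smul_zero]
    have hb : ℓ ^ (j + k) • b = 0 := by rw [pow_add, mul_smul, hk, smul_zero]
    rw [smul_add, ha, hb, add_zero]
  neg_mem' := by
    rintro a ⟨k, hk⟩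
    exact ⟨k, by rw [smul_neg, hk, neg_zero]⟩

/-- The group `ℚ/ℤ`. -/
abbrev QZ : Type := ℚ ⧸ AddSubgroup.zmultiples (1 : ℚ)

/-- The Prüfer `ℓ`-group `ℚ_ℓ/ℤ_ℓ`, realized as the `ℓ`-primary part of `ℚ/ℤ`. -/
abbrev Prufer (ℓ : ℕ) : Type := ↥(primaryPart ℓ QZ)

/-- The maximal divisible subgroup of an abelian group. -/
def divisiblePart (A : Type*) [AddCommGroup A] : AddSubgroup A :=
  sSup {H : AddSubgroup A | ∀ n : ℕ, 0 < n → ∀ x ∈ H, ∃ y ∈ H, n • y = x}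

/-- The torsion subgroup of an abelian group. -/
def torsionSub (A : Type*) [AddCommGroup A] : AddSubgroup A where
  carrier := {x | ∃ n : ℕ, 0 < n ∧ n • x = 0}
  zero_mem' := ⟨1, one_pos, smul_zero 1⟩
  add_mem' := by
    rintro a b ⟨j, hj, hja⟩ ⟨k, hk, hkb⟩
    refine ⟨j * k, Nat.mul_pos hj hk, ?_⟩
    have ha : (j * k) • a = 0 := by rw [mul_comm, mul_smul, hja, smul_zero]
    have hb : (j * k) • b = 0 := by rw [mul_smul, hkb, smul_zero]
    rw [smul_add, ha, hb, add_zero]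
  neg_mem' := by
    rintro a ⟨k, hk, hka⟩
    exact ⟨k, hk, by rw [smul_neg, hka, neg_zero]⟩

/-!
By Zorn's lemma there is a maximal subgroup `G ≤ M × (ℚ/ℤ)^m` that is the graph of an isomorphism
between a subgroup of `M` and a subgroup of `(ℚ/ℤ)^m`. If some `x ∈ M` were outside its domain, we
could arrange `p • x` to be inside it for a prime `p`. If the domain contains `M[p]`, divisibility
of `(ℚ/ℤ)^m` gives `y` with `p • y` the partner of `p • x`, and `(x, y)` extends `G`. Otherwise some
`x' ∈ M[p]` lies outside the domain and, as `|M[p]| = p^m = |(ℚ/ℤ)^m[p]|`, some `y` of order `p`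
lies outside the range, and `(x', y)` extends `G`. So the domain is `M`, and counting `n`-torsion
once more shows that the range is `(ℚ/ℤ)^m`.
-/

open Submodule

lemma mem_nTorsion_iff {A : Type*} [AddCommGroup A] {n : ℕ} {x : A} :
    x ∈ nTorsion n A ↔ n • x = 0 := Iff.rfl

theorem Submodule.mem_of_smul_mem_of_isCoprime {R A : Type*} [CommSemiring R] [AddCommMonoid A]
    [Module R A] {p : Submodule R A} {a b : R} (hab : IsCoprime a b) {x : A} (ha : a • x ∈ p)
    (hb : b • x ∈ p) : x ∈ p := by
  obtain ⟨u, v, huv⟩ := hab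
  have hx : x = u • a • x + v • b • x := by rw [smul_smul, smul_smul, ← add_smul, huv, one_smul]
  rw [hx]
  exact p.add_mem (p.smul_mem u ha) (p.smul_mem v hb)

theorem Submodule.disjoint_sup_span_singleton_ker {R A B : Type*} [CommRing R] [IsDomain R]
    [IsBezout R] [AddCommGroup A] [Module R A] [AddCommGroup B] [Module R B] {G : Submodule R A}
    {f : A →ₗ[R] B} (hG : Disjoint G (LinearMap.ker f)) {p : R} (hp : Prime p) {v : A}
    (hpv : p • v ∈ G) (hfv : f v ∉ G.map f) : Disjoint (G ⊔ R ∙ v) (LinearMap.ker f) := by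
  rw [disjoint_def]
  intro z hz hfz
  obtain ⟨g, hg, w, hw, rfl⟩ := mem_sup.mp hz
  obtain ⟨t, rfl⟩ := mem_span_singleton.mp hw
  by_cases hpt : p ∣ t
  · obtain ⟨s, rfl⟩ := hpt
    refine disjoint_def.mp hG _ (G.add_mem hg ?_) hfz
    rw [mul_comm, mul_smul]
    exact G.smul_mem s hpv
  · refine absurd (mem_of_smul_mem_of_isCoprime (hp.coprime_iff_not_dvd.mpr hpt) ?_ ?_) hfv
    · rw [← map_smul]
      exact mem_map_of_mem hpv
    · rw [LinearMap.mem_ker, map_add, map_smul] at hfz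
      rw [eq_neg_of_add_eq_zero_right hfz]
      exact neg_mem (mem_map_of_mem hg)

noncomputable def Submodule.equivOfDisjointKer {R A B : Type*} [Ring R] [AddCommGroup A]
    [Module R A] [AddCommGroup B] [Module R B] (G : Submodule R A) (f : A →ₗ[R] B)
    (hf : Disjoint G (LinearMap.ker f)) (h : G.map f = ⊤) : G ≃ₗ[R] B :=
  LinearEquiv.ofBijective (f.domRestrict G)
    ⟨LinearMap.injective_domRestrict_iff.mpr hf,
      by rw [← LinearMap.range_eq_top, LinearMap.range_domRestrict, h]⟩

theorem exists_prime_nsmul_mem {A : Type*} [AddMonoid A] {S : Set A} {x : A} {n : ℕ}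
    (hn : n ≠ 0) (hnx : n • x ∈ S) (hx : x ∉ S) : ∃ p : ℕ, p.Prime ∧ ∃ y ∉ S, p • y ∈ S := by
  induction n using Nat.strong_induction_on with
  | _ n ih =>
    have hn1 : n ≠ 1 := by
      rintro rfl
      exact hx (one_smul ℕ x ▸ hnx)
    obtain ⟨k, hk⟩ := n.minFac_dvd
    by_cases hkx : k • x ∈ S
    · have hk0 : k ≠ 0 := by
        rintro rfl
        exact hn (by simpa using hk)
      refine ih k ?_ hk0 hkx
      nlinarith [(Nat.minFac_prime hn1).two_le, Nat.pos_of_ne_zero hk0]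
    · refine ⟨n.minFac, Nat.minFac_prime hn1, k • x, hkx, ?_⟩
      rwa [← mul_smul, ← hk]

section PartialIsoGraph

variable {M N : Type*} [AddCommGroup M] [AddCommGroup N]

/-- `G` is the graph of an isomorphism between its projections `G.map fst` and `G.map snd`. -/
def IsPartialIsoGraph (G : Submodule ℤ (M × N)) : Prop :=
  Disjoint G (LinearMap.ker (LinearMap.fst ℤ M N)) ∧
    Disjoint G (LinearMap.ker (LinearMap.snd ℤ M N))

theorem exists_maximal_isPartialIsoGraph :
    ∃ G : Submodule ℤ (M × N), Maximal IsPartialIsoGraph G := by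
  obtain ⟨G, -, hG⟩ := zorn_le_nonempty₀ {G : Submodule ℤ (M × N) | IsPartialIsoGraph G}
    (fun c hc hchain _ _ => ⟨sSup c,
      ⟨hchain.directedOn.disjoint_sSup_left.mpr fun G hG => (hc hG).1,
        hchain.directedOn.disjoint_sSup_left.mpr fun G hG => (hc hG).2⟩,
      fun _ => le_sSup⟩)
    ⊥ ⟨disjoint_bot_left, disjoint_bot_left⟩
  exact ⟨G, hG⟩

theorem IsPartialIsoGraph.eq_of_snd_eq {G : Submodule ℤ (M × N)} (hG : IsPartialIsoGraph G)
    {z z' : M × N} (hz : z ∈ G) (hz' : z' ∈ G) (h : z.2 = z'.2) : z = z' :=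
  sub_eq_zero.mp (disjoint_def.mp hG.2 _ (G.sub_mem hz hz') (by simp [h]))

theorem Maximal.mem_map_fst_or_mem_map_snd {G : Submodule ℤ (M × N)}
    (hG : Maximal IsPartialIsoGraph G) {p : ℕ} (hp : p.Prime) {v : M × N} (hpv : p • v ∈ G) :
    v.1 ∈ G.map (LinearMap.fst ℤ M N) ∨ v.2 ∈ G.map (LinearMap.snd ℤ M N) := by
  by_contra! ⟨h1, h2⟩
  have hpv' : (p : ℤ) • v ∈ G := by rwa [natCast_zsmul]
  have hp' : Prime (p : ℤ) := Nat.prime_iff_prime_int.mp hp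
  have hext : IsPartialIsoGraph (G ⊔ ℤ ∙ v) :=
    ⟨disjoint_sup_span_singleton_ker hG.1.1 hp' hpv' h1,
      disjoint_sup_span_singleton_ker hG.1.2 hp' hpv' h2⟩
  have hv : v ∈ G := hG.2 hext le_sup_left (mem_sup_right (mem_span_singleton_self v))
  exact h1 (mem_map_of_mem hv)

theorem nTorsion_le_map_of_disjoint_ker {A : Type*} [AddCommGroup A] {G : Submodule ℤ A}
    {f : A →ₗ[ℤ] M} {g : A →ₗ[ℤ] N} (hf : Disjoint G (LinearMap.ker f))
    (hg : Disjoint G (LinearMap.ker g)) {n : ℕ} [Finite (nTorsion n M)]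
    (hcard : Nat.card (nTorsion n N) = Nat.card (nTorsion n M))
    (hN : ∀ y ∈ nTorsion n N, y ∈ G.map g) : ∀ x ∈ nTorsion n M, x ∈ G.map f := by
  choose a haG hag using fun y : nTorsion n N => mem_map.mp (hN y y.2)
  have hna : ∀ y, n • a y = 0 := fun y =>
    disjoint_def.mp hg _ (nsmul_mem (haG y) n) (by rw [LinearMap.mem_ker, map_nsmul, hag]; exact y.2)
  let φ : nTorsion n N → nTorsion n M := fun y =>
    ⟨f (a y), by rw [mem_nTorsion_iff, ← map_nsmul, hna, map_zero]⟩
  have hφ : Function.Injective φ := fun y y' hyy' => by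
    have ha : a y = a y' := sub_eq_zero.mp <| disjoint_def.mp hf _ (G.sub_mem (haG y) (haG y'))
      (by rw [LinearMap.mem_ker, map_sub, sub_eq_zero]; exact congrArg Subtype.val hyy')
    exact Subtype.ext (by rw [← hag y, ← hag y', ha])
  intro x hx
  obtain ⟨y, hy⟩ := ((Nat.bijective_iff_injective_and_card φ).mpr ⟨hφ, hcard⟩).2 ⟨x, hx⟩
  exact ⟨a y, haG y, congrArg Subtype.val hy⟩


theorem Maximal.nTorsion_le_map_fst {G : Submodule ℤ (M × N)} (hG : Maximal IsPartialIsoGraph G)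
    {p : ℕ} (hp : p.Prime) [Finite (nTorsion p M)]
    (hcard : Nat.card (nTorsion p N) = Nat.card (nTorsion p M)) :
    ∀ x ∈ nTorsion p M, x ∈ G.map (LinearMap.fst ℤ M N) := by
  intro x hx
  by_contra hxG
  obtain ⟨y, hyp, hyG⟩ : ∃ y ∈ nTorsion p N, y ∉ G.map (LinearMap.snd ℤ M N) := by
    by_contra! h
    exact hxG (nTorsion_le_map_of_disjoint_ker hG.1.1 hG.1.2 hcard h x hx)
  have hpv : p • (x, y) ∈ G := by
    rw [Prod.smul_mk, mem_nTorsion_iff.mp hx, mem_nTorsion_iff.mp hyp]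
    exact G.zero_mem
  exact (hG.mem_map_fst_or_mem_map_snd hp hpv).elim hxG hyG

theorem Maximal.mem_map_fst_of_nsmul_mem [DivisibleBy N ℤ] {G : Submodule ℤ (M × N)}
    (hG : Maximal IsPartialIsoGraph G) {p : ℕ} (hp : p.Prime)
    (htors : ∀ x ∈ nTorsion p M, x ∈ G.map (LinearMap.fst ℤ M N)) {x : M}
    (hpx : p • x ∈ G.map (LinearMap.fst ℤ M N)) : x ∈ G.map (LinearMap.fst ℤ M N) := by
  by_contra hx
  obtain ⟨v, hvG, hv⟩ := mem_map.mp hpx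
  set y := DivisibleBy.div v.2 (p : ℤ)
  have hpy : p • y = v.2 := by
    rw [← natCast_zsmul]
    exact DivisibleBy.div_cancel _ (by exact_mod_cast hp.ne_zero)
  have hpxy : p • (x, y) = v := Prod.ext hv.symm hpy
  refine (hG.mem_map_fst_or_mem_map_snd hp (v := (x, y)) (by rw [hpxy]; exact hvG)).elim hx
    fun hy => hx ?_
  -- a partner `w.1` of `y` differs from `x` by `p`-torsion, which lies in the domain
  obtain ⟨w, hwG, hwy⟩ := mem_map.mp hy
  have hpw : p • w = v := hG.1.eq_of_snd_eq (nsmul_mem hwG p) hvG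
    (by rw [Prod.smul_snd, ← LinearMap.snd_apply (R := ℤ), hwy, hpy])
  have hxw : x - w.1 ∈ nTorsion p M := by
    rw [mem_nTorsion_iff, smul_sub, ← Prod.smul_fst, hpw, ← hv]
    simp
  simpa using add_mem (htors _ hxw) (mem_map_of_mem hwG)

theorem Maximal.map_fst_eq_top [DivisibleBy N ℤ] {G : Submodule ℤ (M × N)}
    (hG : Maximal IsPartialIsoGraph G) (hM : IsAddTorsion M)
    (hfin : ∀ p : ℕ, p.Prime → Finite (nTorsion p M))
    (hcard : ∀ p : ℕ, p.Prime → Nat.card (nTorsion p N) = Nat.card (nTorsion p M)) :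
    G.map (LinearMap.fst ℤ M N) = ⊤ := by
  set D := G.map (LinearMap.fst ℤ M N)
  refine eq_top_iff'.mpr fun x₀ => by_contra fun hx₀ => ?_
  obtain ⟨n, hn, hnx₀⟩ := isOfFinAddOrder_iff_nsmul_eq_zero.mp (hM x₀)
  obtain ⟨p, hp, x, hx, hpx⟩ :=
    exists_prime_nsmul_mem (S := D) hn.ne' (by rw [hnx₀]; exact D.zero_mem) hx₀
  have := hfin p hp
  exact hx (hG.mem_map_fst_of_nsmul_mem hp (hG.nTorsion_le_map_fst hp (hcard p hp)) hpx)

end PartialIsoGraph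

theorem nonempty_addEquiv_of_card_nTorsion_eq {M N : Type*} [AddCommGroup M] [AddCommGroup N]
    [DivisibleBy N ℤ] (hM : IsAddTorsion M) (hN : IsAddTorsion N)
    (hfin : ∀ n : ℕ, 0 < n → Finite (nTorsion n M))
    (hcard : ∀ n : ℕ, 0 < n → Nat.card (nTorsion n N) = Nat.card (nTorsion n M)) :
    Nonempty (M ≃+ N) := by
  obtain ⟨G, hG⟩ := exists_maximal_isPartialIsoGraph (M := M) (N := N)
  have hfst : G.map (LinearMap.fst ℤ M N) = ⊤ :=
    hG.map_fst_eq_top hM (fun p hp => hfin p hp.pos) fun p hp => hcard p hp.pos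
  have hsnd : G.map (LinearMap.snd ℤ M N) = ⊤ := by
    refine eq_top_iff'.mpr fun y => ?_
    obtain ⟨n, hn, hny⟩ := isOfFinAddOrder_iff_nsmul_eq_zero.mp (hN y)
    have := hfin n hn
    have : Finite (nTorsion n N) := Nat.finite_of_card_ne_zero <| by
      rw [hcard n hn]; exact Nat.card_pos.ne'
    exact nTorsion_le_map_of_disjoint_ker hG.1.2 hG.1.1 (hcard n hn).symm
      (fun x _ => hfst ▸ mem_top) y hny
  exact ⟨((G.equivOfDisjointKer _ hG.1.1 hfst).symm.trans
    (G.equivOfDisjointKer _ hG.1.2 hsnd)).toAddEquiv⟩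

theorem card_nTorsion_QZ {n : ℕ} (hn : 0 < n) : Nat.card (nTorsion n QZ) = n := by
  have hfin := AddCircle.finite_torsion (1 : ℚ) hn
  apply le_antisymm
  · have hle := AddCircle.card_torsion_le_of_isSMulRegular (1 : ℚ) n hn.ne'
      (.of_right_eq_zero_of_smul fun _ ↦ by simp [hn.ne'])
    rw [← hfin.cast_ncard_eq] at hle
    exact_mod_cast hle
  · have : Finite (nTorsion n QZ) := hfin.to_subtype
    have hle : AddSubgroup.zmultiples (((1 : ℚ) / n : ℚ) : QZ) ≤ nTorsion n QZ := by
      rw [AddSubgroup.zmultiples_le]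
      exact ((addOrderOf_eq_iff hn).mp (AddCircle.addOrderOf_period_div hn)).1
    have := AddSubgroup.card_le_of_le hle
    rwa [Nat.card_zmultiples, AddCircle.addOrderOf_period_div hn] at this

theorem isAddTorsion_QZ : IsAddTorsion QZ := fun x => by
  obtain ⟨q, rfl⟩ := QuotientAddGroup.mk_surjective x
  exact AddCircle.isOfFinAddOrder_iff_exists_rat_eq_div.mpr ⟨q, by simp⟩

theorem card_nTorsion_pi {ι : Type*} [Fintype ι] (A : ι → Type*) [∀ i, AddCommGroup (A i)]
    (n : ℕ) : Nat.card (nTorsion n (∀ i, A i)) = ∏ i, Nat.card (nTorsion n (A i)) := by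
  rw [← Nat.card_pi]
  exact Nat.card_congr ((Equiv.subtypeEquivRight fun _ => funext_iff).trans
    (Equiv.subtypePiEquivPi (p := fun i (a : A i) => n • a = 0)))

/-- a torsion abelian group of cofinite type with `|{x : n•x=0}| = n^m` for all
`n ≥ 1` is isomorphic to `(ℚ/ℤ)^m`. -/
theorem stmt_12 {M : Type} [AddCommGroup M]
    (htors : ∀ x : M, ∃ n : ℕ, 0 < n ∧ n • x = 0)
    (hfin : ∀ n : ℕ, 0 < n → Finite (nTorsion n M))
    (m : ℕ) (hcard : ∀ n : ℕ, 0 < n → Nat.card (nTorsion n M) = n ^ m) :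
    Nonempty (M ≃+ (Fin m → QZ)) := by
  refine nonempty_addEquiv_of_card_nTorsion_eq
    (fun x => isOfFinAddOrder_iff_nsmul_eq_zero.mpr (htors x))
    (fun x => IsOfFinAddOrder.pi fun i => isAddTorsion_QZ (x i)) hfin fun n hn => ?_
  rw [card_nTorsion_pi, hcard n hn]
  simp [card_nTorsion_QZ hn]
end

section
/- Let 0 → F → R → T^m × T₀ → 0 be an exact sequence of abelian groups with F finite and m ≥ 1. Assume that for a positive integer n all n-torsion subgroups and mod-n quotients occurring are finite, and that |{x∈R : n•x=0}|/|R/nR| = n^{-a} and |{x∈T₀ : n•x=0}|/|T₀/nT₀| = n^{-b} for natural numbers a, b with a ≥ b and m | (a - b). Then |{x∈T : n•x=0}|/|T/nT| = n^{-(a-b)/m}. -/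
/-!
Let `K` be the finite kernel of the surjection `g : R → S = T^m × T₀`, and `N = nR`. Counting
the preimage of `K` under multiplication by `n` in two ways (through `g` and through `n•`) gives
`|K| · |S[n]| = |R[n]| · |N ∩ K|`, while `[R : N] = [S : nS] · [K : N ∩ K]` because `nS` is the
image of `N`. Since `|K| = |N ∩ K| · [K : N ∩ K]` with `N ∩ K` finite, this yields
`[R : nR] · |S[n]| = [S : nS] · |R[n]|`. Both counts are multiplicative in products, so the
hypotheses on `R` and `T₀` leave `[T : nT]^m = (|T[n]| · n^((a-b)/m))^m`.
-/

open AddSubgroup Function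

section

variable {G G' : Type*} [AddGroup G] [AddGroup G']

theorem AddSubgroup.card_comap (f : G →+ G') (H : AddSubgroup G') :
    Nat.card (H.comap f) = Nat.card f.ker * Nat.card ↥(f.range ⊓ H) := by
  rw [← relIndex_bot_left, ← relIndex_mul_relIndex ⊥ f.ker _ bot_le (f.ker_le_comap H),
    relIndex_bot_left, relIndex_ker, map_comap_eq]

theorem AddSubgroup.card_inf_mul_relIndex (H K : AddSubgroup G) :
    Nat.card ↥(H ⊓ K) * H.relIndex K = Nat.card K := by
  simpa only [bot_inf_eq, relIndex_bot_left] using relIndex_inf_mul_relIndex ⊥ H K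

theorem AddSubgroup.index_map_mul_relIndex_ker {f : G →+ G'} (hf : Surjective f)
    (N : AddSubgroup G) [N.Normal] : (N.map f).index * N.relIndex f.ker = N.index := by
  rw [index_map, f.range_eq_top_of_surjective hf, index_top, mul_one,
    ← relIndex_sup_left f.ker N, mul_comm, relIndex_mul_index le_sup_left]

end

section

variable (n : ℕ) {A B ι : Type*} [AddCommGroup A] [AddCommGroup B]

theorem smulTop_eq_range : smulTop n A = (nsmulAddMonoidHom n).range := rfl

theorem nTorsion_eq_ker : nTorsion n A = (nsmulAddMonoidHom n).ker := rfl

theorem smulTop_prod : smulTop n (A × B) = (smulTop n A).prod (smulTop n B) := by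
  rw [smulTop_eq_range, smulTop_eq_range, smulTop_eq_range, ← AddMonoidHom.range_prodMap]
  rfl

theorem nTorsion_prod : nTorsion n (A × B) = (nTorsion n A).prod (nTorsion n B) := by
  rw [nTorsion_eq_ker, nTorsion_eq_ker, nTorsion_eq_ker, ← AddMonoidHom.ker_prodMap]
  rfl

theorem smulTop_pi : smulTop n (ι → A) = pi Set.univ fun _ => smulTop n A := by
  ext x
  simp only [mem_pi, Set.mem_univ, true_implies]
  exact ⟨fun ⟨y, hy⟩ i => ⟨y i, congrFun hy i⟩,
    fun h => ⟨fun i => (h i).choose, funext fun i => (h i).choose_spec⟩⟩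

theorem index_smulTop_prod :
    (smulTop n (A × B)).index = (smulTop n A).index * (smulTop n B).index := by
  rw [smulTop_prod, index_prod]

theorem index_smulTop_pi [Fintype ι] :
    (smulTop n (ι → A)).index = (smulTop n A).index ^ Nat.card ι := by
  rw [smulTop_pi, index_pi, Finset.prod_const, Finset.card_univ, Nat.card_eq_fintype_card]

theorem card_nTorsion_prod :
    Nat.card (nTorsion n (A × B)) = Nat.card (nTorsion n A) * Nat.card (nTorsion n B) := by
  rw [nTorsion_prod, Nat.card_congr (prodEquiv _ _).toEquiv, Nat.card_prod]

theorem card_nTorsion_pi_s17 [Finite ι] :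
    Nat.card (nTorsion n (ι → A)) = Nat.card (nTorsion n A) ^ Nat.card ι := by
  rw [← Nat.card_fun]
  exact Nat.card_congr
    { toFun x i := ⟨x.1 i, congrFun x.2 i⟩
      invFun y := ⟨fun i => y i, funext fun i => (y i).2⟩ }

theorem index_smulTop_mul_card_nTorsion_of_surjective {R S : Type*}
    [AddCommGroup R] [AddCommGroup S] {g : R →+ S} (hg : Surjective g) [Finite g.ker] :
    (smulTop n R).index * Nat.card (nTorsion n S) =
      (smulTop n S).index * Nat.card (nTorsion n R) := by
  set N := smulTop n R
  set K := g.ker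
  have hmap : N.map g = smulTop n S := by
    ext s
    constructor
    · rintro ⟨_, ⟨r, rfl⟩, rfl⟩
      exact ⟨g r, (map_nsmul g n r).symm⟩
    · rintro ⟨s, rfl⟩
      obtain ⟨r, rfl⟩ := hg s
      exact ⟨n • r, ⟨r, rfl⟩, map_nsmul g n r⟩
  have hpreimage :
      Nat.card K * Nat.card (nTorsion n S) = Nat.card (nTorsion n R) * Nat.card ↥(N ⊓ K) := by
    have hcomap : (nTorsion n S).comap g = K.comap (nsmulAddMonoidHom n) := by
      ext r
      simp [nTorsion_eq_ker, K, map_nsmul]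
    have h₁ := card_comap g (nTorsion n S)
    have h₂ := card_comap (nsmulAddMonoidHom n) K
    rw [g.range_eq_top_of_surjective hg, top_inf_eq, hcomap, h₂] at h₁
    exact h₁.symm
  have hNK : 0 < Nat.card ↥(N ⊓ K) :=
    have : Finite ↥(N ⊓ K) := Finite.of_injective _ (inclusion_injective inf_le_right)
    Nat.card_pos
  refine Nat.eq_of_mul_eq_mul_right hNK ?_
  calc N.index * Nat.card (nTorsion n S) * Nat.card ↥(N ⊓ K)
      = (smulTop n S).index * (Nat.card K * Nat.card (nTorsion n S)) := by
        rw [← hmap, ← card_inf_mul_relIndex N K, ← index_map_mul_relIndex_ker hg N]; ring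
    _ = (smulTop n S).index * Nat.card (nTorsion n R) * Nat.card ↥(N ⊓ K) := by
        rw [hpreimage]; ring

end

theorem stmt_17_general {F R T T₀ : Type}
    [AddCommGroup F] [AddCommGroup R] [AddCommGroup T] [AddCommGroup T₀] [Finite F]
    (m : ℕ) (hm : 0 < m)
    (f : F →+ R) (g : R →+ (Fin m → T) × T₀)
    (hg : Function.Surjective g) (hex : f.range = g.ker)
    (n : ℕ) (hn : 0 < n)
    (hT0t : Finite (nTorsion n T₀)) (hRt : Finite (nTorsion n R))
    (a b : ℕ) (hab : b ≤ a) (hdvd : m ∣ a - b)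
    (hR : Nat.card (R ⧸ smulTop n R) = Nat.card (nTorsion n R) * n ^ a)
    (hT0 : Nat.card (T₀ ⧸ smulTop n T₀) = Nat.card (nTorsion n T₀) * n ^ b) :
    Nat.card (T ⧸ smulTop n T) = Nat.card (nTorsion n T) * n ^ ((a - b) / m) := by
  have : Finite g.ker := hex ▸ Finite.of_surjective _ f.rangeRestrict_surjective
  have hratio := index_smulTop_mul_card_nTorsion_of_surjective n hg
  rw [index_smulTop_prod, index_smulTop_pi, card_nTorsion_prod, card_nTorsion_pi_s17, Nat.card_fin]
    at hratio
  simp only [← index_eq_card] at hR hT0 ⊢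
  obtain ⟨k, hk⟩ := hdvd
  obtain rfl : a = b + m * k := by omega
  rw [hk, Nat.mul_div_cancel_left k hm]
  rw [hR, hT0, pow_add, pow_mul'] at hratio
  have hpos : 0 < Nat.card (nTorsion n R) * Nat.card (nTorsion n T₀) * n ^ b := by
    have := Nat.card_pos (α := nTorsion n R)
    have := Nat.card_pos (α := nTorsion n T₀)
    positivity
  have hpow : (Nat.card (nTorsion n T) * n ^ k) ^ m = (smulTop n T).index ^ m :=
    Nat.eq_of_mul_eq_mul_right hpos (by rw [mul_pow]; linarith [hratio])
  exact (Nat.pow_left_injective hm.ne' hpow).symm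

/-- Ono's lemma counting argument. Given `0 → F → R → T^m × T₀ → 0` exact with `F`
finite, if the torsion/quotient counting ratio of `R` is `n^{-a}` and that of `T₀` is `n^{-b}`
with `b ≤ a` and `m ∣ a - b`, then the ratio for `T` is `n^{-(a-b)/m}`
(all ratios stated multiplicatively). -/
theorem stmt_17 {F R T T₀ : Type}
    [AddCommGroup F] [AddCommGroup R] [AddCommGroup T] [AddCommGroup T₀] [Finite F]
    (m : ℕ) (hm : 0 < m)
    (f : F →+ R) (g : R →+ (Fin m → T) × T₀)
    (hf : Function.Injective f) (hg : Function.Surjective g) (hex : f.range = g.ker)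
    (n : ℕ) (hn : 0 < n)
    (hTt : Finite (nTorsion n T)) (hTq : Finite (T ⧸ smulTop n T))
    (hT0t : Finite (nTorsion n T₀)) (hT0q : Finite (T₀ ⧸ smulTop n T₀))
    (hRt : Finite (nTorsion n R)) (hRq : Finite (R ⧸ smulTop n R))
    (a b : ℕ) (hab : b ≤ a) (hdvd : m ∣ a - b)
    (hR : Nat.card (R ⧸ smulTop n R) = Nat.card (nTorsion n R) * n ^ a)
    (hT0 : Nat.card (T₀ ⧸ smulTop n T₀) = Nat.card (nTorsion n T₀) * n ^ b) :
    Nat.card (T ⧸ smulTop n T) = Nat.card (nTorsion n T) * n ^ ((a - b) / m) :=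
  stmt_17_general m hm f g hg hex n hn hT0t hRt a b hab hdvd hR hT0
end
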